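/- arXiv:2003.01566 — 7 statements merged into one kernel-verified Lean document; each statement's English description precedes it below -/
import Mathlib

section
/- Let $E$ be a normed space and $e \in S(E)$ a unit vector. If $\mathrm{St}(e) = \{e\}$, then $e$ is an extreme point of the closed unit ball $E_1$. -/
/-!
If `e` is a unit vector lying strictly inside the segment `[x, y]` of the unit ball, then `2e`
lies strictly inside `[e + x, e + y]`, a segment of the ball of radius `2`. A point of norm `r` in
the open segment between two points of norm at most `r` forces both endpoints to have norm `r`,
so `‖e + x‖ = 2`, hence `‖x‖ = 1` and `x ∈ St e = {e}`.
-/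

/-- The star-like set of a unit vector `e`. -/
def St {E : Type*} [NormedAddCommGroup E] (e : E) : Set E :=
  {e' | ‖e'‖ = 1 ∧ ‖e + e'‖ = 2}

theorem norm_eq_left_of_mem_openSegment {E : Type*} [SeminormedAddCommGroup E] [NormedSpace ℝ E]
    {u v w : E} {r : ℝ} (hu : ‖u‖ ≤ r) (hv : ‖v‖ ≤ r) (hw : w ∈ openSegment ℝ u v)
    (hwr : ‖w‖ = r) : ‖u‖ = r := by
  obtain ⟨a, b, ha, hb, hab, rfl⟩ := hw
  have : r ≤ a * ‖u‖ + b * ‖v‖ :=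
    calc r = ‖a • u + b • v‖ := hwr.symm
      _ ≤ ‖a • u‖ + ‖b • v‖ := norm_add_le _ _
      _ = a * ‖u‖ + b * ‖v‖ := by rw [norm_smul_of_nonneg ha.le, norm_smul_of_nonneg hb.le]
  refine le_antisymm hu (not_lt.1 fun hlt => ?_)
  have hr : (a + b) * r = r := by rw [hab, one_mul]
  linarith [mul_lt_mul_of_pos_left hlt ha, mul_le_mul_of_nonneg_left hv hb.le]

theorem mem_st_of_mem_openSegment {E : Type*} [NormedAddCommGroup E] [NormedSpace ℝ E]
    {e x y : E} (he : ‖e‖ = 1) (hx : ‖x‖ ≤ 1) (hy : ‖y‖ ≤ 1) (hxy : e ∈ openSegment ℝ x y) :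
    x ∈ St e := by
  have hex : ‖e + x‖ ≤ 2 := (norm_add_le e x).trans (by linarith)
  have hey : ‖e + y‖ ≤ 2 := (norm_add_le e y).trans (by linarith)
  have hseg : e + e ∈ openSegment ℝ (e + x) (e + y) := (mem_openSegment_translate ℝ e).2 hxy
  have hee : ‖e + e‖ = 2 := by rw [← two_smul ℝ e, norm_smul, he]; norm_num
  have hex2 : ‖e + x‖ = 2 := norm_eq_left_of_mem_openSegment hex hey hseg hee
  refine ⟨le_antisymm hx ?_, hex2⟩
  linarith [norm_add_le e x]

theorem extremePoint_of_st_singleton {E : Type*} [NormedAddCommGroup E] [NormedSpace ℝ E]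
    (e : E) (he : ‖e‖ = 1) (h : St e = {e}) :
    e ∈ Set.extremePoints ℝ (Metric.closedBall (0 : E) 1) := by
  refine mem_extremePoints_iff_left.2 ⟨by simp [he], fun x hx y hy hxy => ?_⟩
  rw [mem_closedBall_zero_iff] at hx hy
  simpa [h] using mem_st_of_mem_openSegment he hx hy hxy
end

section
/- Let $R_1$ and $R_2$ be distinct T-sets in a normed space $E$ with $R_1 \cap R_2 \neq \{0\}$. Then for any $w_1^* \in \Gamma_{R_1}$ and $w_2^* \in \Gamma_{R_2}$, $\|w_1^* + w_2^*\| = 2$, i.e., $w_1^* \in \mathrm{St}(w_2^*)$. -/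
def NormAdditive {E : Type*} [NormedAddCommGroup E] (S : Set E) : Prop :=
  ∀ l : List E, (∀ e ∈ l, e ∈ S) → ‖l.sum‖ = (l.map fun e => ‖e‖).sum

def IsTSet {E : Type*} [NormedAddCommGroup E] (S : Set E) : Prop :=
  NormAdditive S ∧ ∀ R : Set E, NormAdditive R → S ⊆ R → R = S

/-- The set of norm-one functionals norming every element of `R`. -/
def Gamma {E : Type*} [NormedAddCommGroup E] [NormedSpace ℝ E] (R : Set E) :
    Set (E →L[ℝ] ℝ) := {w | ‖w‖ = 1 ∧ ∀ u ∈ R, w u = ‖u‖}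

/-!
The maximality of a T-set forces it to contain `0`, since adjoining `0` keeps a set norm
additive. Hence `R₁ ∩ R₂ ≠ {0}` yields some `x ≠ 0` in both sets, and `w₁ + w₂` attains
`‖w₁‖ + ‖w₂‖ = 2` at `x / ‖x‖`.
-/

lemma List.sum_map_filter_ne_zero {α M : Type*} [Zero α] [DecidableEq α] [AddMonoid M]
    (f : α → M) (hf : f 0 = 0) (l : List α) :
    ((l.filter (· ≠ 0)).map f).sum = (l.map f).sum := by
  induction l with
  | nil => rfl
  | cons a t ih => by_cases ha : a = 0 <;> simp_all

section NormAdditive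

variable {E : Type*} [NormedAddCommGroup E]

lemma NormAdditive.insert_zero {S : Set E} (hS : NormAdditive S) :
    NormAdditive (insert 0 S) := by
  classical
  intro l hl
  have hmem : ∀ e ∈ l.filter (· ≠ 0), e ∈ S := by
    intro e he
    obtain ⟨he, hne⟩ := List.mem_filter.mp he
    exact (hl e he).resolve_left (by simpa using hne)
  have hsum : (l.filter (· ≠ 0)).sum = l.sum := by
    simpa using List.sum_map_filter_ne_zero id rfl l
  rw [← hsum, ← List.sum_map_filter_ne_zero _ norm_zero]
  exact hS _ hmem

lemma IsTSet.zero_mem {S : Set E} (hS : IsTSet S) : (0 : E) ∈ S :=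
  hS.2 _ hS.1.insert_zero (Set.subset_insert _ _) ▸ Set.mem_insert _ _

lemma IsTSet.exists_ne_zero_mem_inter {S T : Set E} (hS : IsTSet S) (hT : IsTSet T)
    (h : S ∩ T ≠ {0}) : ∃ x ∈ S ∩ T, x ≠ 0 := by
  by_contra! hx
  exact h <| Set.eq_singleton_iff_unique_mem.mpr ⟨⟨hS.zero_mem, hT.zero_mem⟩, hx⟩

end NormAdditive

lemma ContinuousLinearMap.norm_add_eq_of_apply_eq {E : Type*} [NormedAddCommGroup E]
    [NormedSpace ℝ E] {w₁ w₂ : E →L[ℝ] ℝ} {x : E} (hx : x ≠ 0)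
    (h₁ : w₁ x = ‖w₁‖ * ‖x‖) (h₂ : w₂ x = ‖w₂‖ * ‖x‖) :
    ‖w₁ + w₂‖ = ‖w₁‖ + ‖w₂‖ := by
  refine le_antisymm (norm_add_le _ _) (le_of_mul_le_mul_right ?_ (norm_pos_iff.mpr hx))
  calc (‖w₁‖ + ‖w₂‖) * ‖x‖ = (w₁ + w₂) x := by rw [add_apply, h₁, h₂, add_mul]
    _ ≤ ‖(w₁ + w₂) x‖ := Real.le_norm_self _
    _ ≤ ‖w₁ + w₂‖ * ‖x‖ := le_opNorm _ _

theorem gamma_st_general {E : Type*} [NormedAddCommGroup E] [NormedSpace ℝ E]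
    (R₁ R₂ : Set E) (hR₁ : IsTSet R₁) (hR₂ : IsTSet R₂)
    (hint : R₁ ∩ R₂ ≠ {0}) (w₁ w₂ : E →L[ℝ] ℝ)
    (hw₁ : w₁ ∈ Gamma R₁) (hw₂ : w₂ ∈ Gamma R₂) :
    ‖w₁ + w₂‖ = 2 := by
  obtain ⟨x, ⟨hx₁, hx₂⟩, hx⟩ := hR₁.exists_ne_zero_mem_inter hR₂ hint
  have h₁ : w₁ x = ‖w₁‖ * ‖x‖ := by rw [hw₁.1, one_mul, hw₁.2 x hx₁]
  have h₂ : w₂ x = ‖w₂‖ * ‖x‖ := by rw [hw₂.1, one_mul, hw₂.2 x hx₂]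
  rw [ContinuousLinearMap.norm_add_eq_of_apply_eq hx h₁ h₂, hw₁.1, hw₂.1]
  norm_num

theorem gamma_st {E : Type*} [NormedAddCommGroup E] [NormedSpace ℝ E]
    (R₁ R₂ : Set E) (hR₁ : IsTSet R₁) (hR₂ : IsTSet R₂) (hne : R₁ ≠ R₂)
    (hint : R₁ ∩ R₂ ≠ {0}) (w₁ w₂ : E →L[ℝ] ℝ)
    (hw₁ : w₁ ∈ Gamma R₁) (hw₂ : w₂ ∈ Gamma R₂) :
    ‖w₁ + w₂‖ = 2 :=
  gamma_st_general R₁ R₂ hR₁ hR₂ hint w₁ w₂ hw₁ hw₂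
end

section
/- If $R_1$ and $R_2$ are distinct T-sets in a normed space $E$, then $\Gamma_{R_1} \cap \Gamma_{R_2} = \emptyset$. -/
/-! If `‖w‖ ≤ 1`, the set of vectors normed by `w` is norm additive, because
`∑ ‖eᵢ‖ = w (∑ eᵢ) ≤ ‖∑ eᵢ‖`. By maximality, a T-set `R` with `w ∈ Γ_R` is exactly that set,
so two T-sets sharing a functional coincide. -/

section

variable {E : Type*} [NormedAddCommGroup E] [NormedSpace ℝ E]

lemma normAdditive_setOf_apply_eq_norm {w : E →L[ℝ] ℝ} (hw : ‖w‖ ≤ 1) :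
    NormAdditive {u : E | w u = ‖u‖} := by
  intro l hl
  refine le_antisymm (List.le_sum_of_subadditive _ norm_zero.le norm_add_le l) ?_
  have hsum : (l.map fun e => ‖e‖).sum = w l.sum := by
    rw [map_list_sum]
    exact congrArg List.sum (List.map_congr_left fun e he => (hl e he).symm)
  calc (l.map fun e => ‖e‖).sum = w l.sum := hsum
    _ ≤ ‖w‖ * ‖l.sum‖ := (le_abs_self _).trans (w.le_opNorm _)
    _ ≤ ‖l.sum‖ := mul_le_of_le_one_left (norm_nonneg _) hw

lemma IsTSet.eq_setOf_apply_eq_norm {R : Set E} (hR : IsTSet R) {w : E →L[ℝ] ℝ}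
    (hw : w ∈ Gamma R) : {u : E | w u = ‖u‖} = R :=
  hR.2 _ (normAdditive_setOf_apply_eq_norm hw.1.le) hw.2

end

theorem gamma_disjoint {E : Type*} [NormedAddCommGroup E] [NormedSpace ℝ E]
    (R₁ R₂ : Set E) (hR₁ : IsTSet R₁) (hR₂ : IsTSet R₂) (hne : R₁ ≠ R₂) :
    Gamma R₁ ∩ Gamma R₂ = ∅ := by
  refine Set.eq_empty_of_forall_notMem fun w ⟨hw₁, hw₂⟩ => hne ?_
  rw [← hR₁.eq_setOf_apply_eq_norm hw₁, ← hR₂.eq_setOf_apply_eq_norm hw₂]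
end

section
/- If $E$ is a normed space whose dual $E^*$ is strictly convex, then for every T-set $R$ in $E$, the set $\Gamma_R$ contains at most one element (and since $\Gamma_R$ is nonempty for any T-set, it is a singleton). -/
theorem normAdditive_singleton_zero {E : Type*} [NormedAddCommGroup E] :
    NormAdditive ({0} : Set E) := by
  intro l hl
  have hsum : l.sum = 0 := List.sum_eq_zero hl
  have hnorms : (l.map fun e => ‖e‖).sum = 0 :=
    List.sum_eq_zero fun _ hx => by
      obtain ⟨e, he, rfl⟩ := List.mem_map.1 hx
      simp [Set.mem_singleton_iff.1 (hl e he)]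
  rw [hsum, hnorms, norm_zero]

theorem IsTSet.exists_ne_zero {E : Type*} [NormedAddCommGroup E] {R : Set E}
    (hR : IsTSet R) (hR0 : R ≠ {0}) : ∃ u ∈ R, u ≠ 0 := by
  by_contra! h
  exact hR0 (hR.2 {0} normAdditive_singleton_zero h).symm

theorem two_le_norm_add_of_apply_eq_norm {E : Type*} [NormedAddCommGroup E]
    [NormedSpace ℝ E] {f g : E →L[ℝ] ℝ} {u : E} (hu : u ≠ 0)
    (hf : f u = ‖u‖) (hg : g u = ‖u‖) : 2 ≤ ‖f + g‖ := by
  have hupos : 0 < ‖u‖ := norm_pos_iff.2 hu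
  refine le_of_mul_le_mul_right ?_ hupos
  calc 2 * ‖u‖ = (f + g) u := by simp [hf, hg, two_mul]
    _ ≤ ‖(f + g) u‖ := le_abs_self _
    _ ≤ ‖f + g‖ * ‖u‖ := (f + g).le_opNorm u

theorem gamma_subsingleton_of_dual_strictConvex {E : Type*} [NormedAddCommGroup E]
    [NormedSpace ℝ E]
    (hsc : ∀ f g : E →L[ℝ] ℝ, ‖f‖ = 1 → ‖g‖ = 1 → f ≠ g → ‖f + g‖ < 2)
    (R : Set E) (hR : IsTSet R) (hR0 : R ≠ {0})
    (w₁ w₂ : E →L[ℝ] ℝ) (hw₁ : w₁ ∈ Gamma R) (hw₂ : w₂ ∈ Gamma R) :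
    w₁ = w₂ := by
  obtain ⟨u, huR, hu0⟩ := hR.exists_ne_zero hR0
  by_contra hne
  exact (hsc w₁ w₂ hw₁.1 hw₂.1 hne).not_ge
    (two_le_norm_add_of_apply_eq_norm hu0 (hw₁.2 u huR) (hw₂.2 u huR))
end

section
/- Let $X$ be a locally compact Hausdorff space, $E$ a normed space, $S$ a T-set in $E$, and $x \in X$. Then the set $(S,x) = \{f \in C_0(X,E) : f(x) \in S, \|f\|_\infty = \|f(x)\|\}$ is a norm additive subset of $C_0(X,E)$. -/
open scoped ZeroAtInfty

/-- The set `(S, x)` of functions attaining their norm at `x` with value in `S`. -/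
def TSetAt {X : Type*} [TopologicalSpace X] {E : Type*} [NormedAddCommGroup E]
    (S : Set E) (x : X) : Set C₀(X, E) := {f | f x ∈ S ∧ ‖f‖ = ‖f x‖}

/- Squeeze `‖∑ eᵢ‖ ≤ ∑ ‖eᵢ‖ = ∑ ‖φ eᵢ‖ = ‖φ (∑ eᵢ)‖ ≤ ‖∑ eᵢ‖`, the middle step by norm
additivity of `S`. -/
theorem NormAdditive.comap_of_norm_map_le {E F : Type*} [NormedAddCommGroup E]
    [NormedAddCommGroup F] {S : Set F} (hS : NormAdditive S) (φ : E →+ F)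
    (hφ : ∀ e, ‖φ e‖ ≤ ‖e‖) : NormAdditive {e | φ e ∈ S ∧ ‖e‖ = ‖φ e‖} := by
  intro l hl
  have norm_eq : (l.map fun e => ‖e‖) = l.map fun e => ‖φ e‖ :=
    List.map_congr_left fun e he => (hl e he).2
  have image_additive : ‖(l.map φ).sum‖ = (l.map fun e => ‖φ e‖).sum := by
    rw [hS _ fun _ hφe => ?_, List.map_map]
    · rfl
    · obtain ⟨e, he, rfl⟩ := List.mem_map.mp hφe
      exact (hl e he).1
  refine le_antisymm ?_ ?_
  · simpa using norm_multiset_sum_le (l : Multiset E)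
  · calc (l.map fun e => ‖e‖).sum = ‖φ l.sum‖ := by rw [norm_eq, ← image_additive, map_list_sum]
      _ ≤ ‖l.sum‖ := hφ _

namespace ZeroAtInftyContinuousMap

variable {X E : Type*} [TopologicalSpace X] [NormedAddCommGroup E]

def evalAddMonoidHom (x : X) : C₀(X, E) →+ E where
  toFun f := f x
  map_zero' := rfl
  map_add' _ _ := rfl

theorem norm_apply_le (f : C₀(X, E)) (x : X) : ‖f x‖ ≤ ‖f‖ :=
  norm_toBCF_eq_norm (f := f) ▸ f.toBCF.norm_coe_le_norm x

end ZeroAtInftyContinuousMap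

theorem tsetAt_normAdditive_general {X : Type*} [TopologicalSpace X] {E : Type*} [NormedAddCommGroup E]
    (S : Set E) (hS : IsTSet S) (x : X) :
    NormAdditive (TSetAt S x) :=
  hS.1.comap_of_norm_map_le (ZeroAtInftyContinuousMap.evalAddMonoidHom x)
    fun f => f.norm_apply_le x

theorem tsetAt_normAdditive {X : Type*} [TopologicalSpace X] [LocallyCompactSpace X]
    [T2Space X] {E : Type*} [NormedAddCommGroup E]
    (S : Set E) (hS : IsTSet S) (x : X) :
    NormAdditive (TSetAt S x) :=
  tsetAt_normAdditive_general S hS x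
end

section
/- Let $X, Y$ be compact Hausdorff spaces, $E, F$ normed spaces, and $A \subseteq C(X,E)$, $B \subseteq C(Y,F)$ subspaces containing the constant functions, equipped with norms $\|f\|_A = \max(\|f\|_\infty, p(f))$ and $\|g\|_B = \max(\|g\|_\infty, q(g))$ where $p, q$ are seminorms vanishing on constants. If $T: A \to B$ is a surjective real-linear isometry (for $\|\cdot\|_A, \|\cdot\|_B$) such that both $T$ and $T^{-1}$ satisfy property (St), then $T$ is an isometry with respect to the supremum norms: $\|Tf\|_\infty = \|f\|_\infty$ for all $f \in A$. -/
/-! Constants are `p`- and `q`-null, so adding a multiple of a unit constant moves the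
`max`-norm only through the sup norm. If `q (T h) ≤ ‖T h‖∞` but `‖h‖∞ < ‖T h‖∞`, take a
peak `y₀` of `T h`, put `s = ‖T h‖∞ - ‖h‖∞`, and use (St) to get a unit constant `v̂` with
`‖(T h + s • T v̂)(y₀)‖ > ‖T h‖∞`: then `h + s • v̂` has `max`-norm at most `‖T h‖∞`, while
its image has larger sup norm. So `T` cannot increase the sup norm of an element whose image
is `q`-dominated, and likewise for `T⁻¹`. An arbitrary `f` becomes `p`-dominated after adding
`p f • v̂`, where `v̂` points along `f` at a peak: this raises `‖f‖∞` by exactly `p f` and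
`‖T f‖∞` by at most `p f`. -/

open ContinuousMap

theorem ContinuousMap.exists_norm_apply_eq_norm {Z G : Type*} [TopologicalSpace Z]
    [CompactSpace Z] [NormedAddCommGroup G] (f : C(Z, G)) (hf : 0 < ‖f‖) :
    ∃ z, ‖f z‖ = ‖f‖ := by
  have : Nonempty Z := by
    by_contra hZ
    rw [not_nonempty_iff] at hZ
    simp [Subsingleton.elim f 0] at hf
  obtain ⟨z, -, hz⟩ := isCompact_univ.exists_isMaxOn Set.univ_nonempty
    f.continuous.norm.continuousOn
  exact ⟨z, le_antisymm (f.norm_coe_le_norm z)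
    ((f.norm_le (norm_nonneg _)).2 fun y => hz (Set.mem_univ y))⟩

theorem Seminorm.map_add_smul_le_of_map_eq_zero {V : Type*} [AddCommGroup V] [Module ℝ V]
    (p : Seminorm ℝ V) {c : V} (hc : p c = 0) (f : V) (t : ℝ) : p (f + t • c) ≤ p f :=
  calc p (f + t • c) ≤ p f + ‖t‖ * p c :=
        (map_add_le_add p _ _).trans_eq (by rw [map_smul_eq_mul])
    _ = p f := by rw [hc, mul_zero, add_zero]

theorem norm_add_smul_le_of_norm_le_one {V : Type*} [SeminormedAddCommGroup V] [NormedSpace ℝ V]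
    (f : V) {c : V} (hc : ‖c‖ ≤ 1) {t : ℝ} (ht : 0 ≤ t) : ‖f + t • c‖ ≤ ‖f‖ + t :=
  calc ‖f + t • c‖ ≤ ‖f‖ + t * ‖c‖ := by
        simpa [norm_smul, abs_of_nonneg ht] using norm_add_le f (t • c)
    _ ≤ ‖f‖ + t := by nlinarith

section

variable {X Y E F : Type*} [TopologicalSpace X] [TopologicalSpace Y]
  [NormedAddCommGroup E] [NormedSpace ℝ E] [NormedAddCommGroup F] [NormedSpace ℝ F]
  {A : Submodule ℝ C(X, E)} {B : Submodule ℝ C(Y, F)}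

def SatisfiesSt (hA : ∀ v : E, const X v ∈ A) (S : A →ₗ[ℝ] B) : Prop :=
  ∀ (u : F) (y₀ : Y), ∃ v : E, ‖v‖ = 1 ∧ ‖u‖ < ‖(S ⟨const X v, hA v⟩ : C(Y, F)) y₀ + u‖

theorem SatisfiesSt.exists_lt_norm_add_smul {hA : ∀ v : E, const X v ∈ A} {S : A →ₗ[ℝ] B}
    (hSt : SatisfiesSt hA S) (u : F) (y₀ : Y) {s : ℝ} (hs : 0 < s) :
    ∃ v : E, ‖v‖ = 1 ∧ ‖u‖ < ‖u + s • (S ⟨const X v, hA v⟩ : C(Y, F)) y₀‖ := by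
  obtain ⟨v, hv, hgt⟩ := hSt (s⁻¹ • u) y₀
  refine ⟨v, hv, ?_⟩
  have hu : u + s • (S ⟨const X v, hA v⟩ : C(Y, F)) y₀
      = s • ((S ⟨const X v, hA v⟩ : C(Y, F)) y₀ + s⁻¹ • u) := by
    rw [smul_add, smul_inv_smul₀ hs.ne', add_comm]
  rw [hu, norm_smul, Real.norm_of_nonneg hs.le]
  rw [norm_smul, Real.norm_of_nonneg (inv_nonneg.2 hs.le)] at hgt
  calc ‖u‖ = s * (s⁻¹ * ‖u‖) := by field_simp
    _ < _ := mul_lt_mul_of_pos_left hgt hs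

variable [CompactSpace X] [CompactSpace Y]

def PreservesMaxNorm (p : Seminorm ℝ A) (q : Seminorm ℝ B) (S : A →ₗ[ℝ] B) : Prop :=
  ∀ f, max ‖S f‖ (q (S f)) = max ‖f‖ (p f)

namespace PreservesMaxNorm

variable {p : Seminorm ℝ A} {q : Seminorm ℝ B}

theorem norm_map_le {S : A →ₗ[ℝ] B} (hiso : PreservesMaxNorm p q S) (f : A) :
    ‖S f‖ ≤ max ‖f‖ (p f) :=
  (le_max_left _ _).trans_eq (hiso f)

theorem injective {S : A →ₗ[ℝ] B} (hiso : PreservesMaxNorm p q S) : Function.Injective S := by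
  refine (injective_iff_map_eq_zero S).2 fun f hf => norm_le_zero_iff.1 (show ‖f‖ ≤ 0 from ?_)
  have := hiso f
  rw [hf, norm_zero, map_zero, max_self] at this
  exact (le_max_left _ _).trans this.ge

theorem symm {S : A ≃ₗ[ℝ] B} (hiso : PreservesMaxNorm p q S) :
    PreservesMaxNorm q p S.symm := fun g => by
  simpa using (hiso (S.symm g)).symm

end PreservesMaxNorm

variable {hA : ∀ v : E, const X v ∈ A}
  {p : Seminorm ℝ A} {q : Seminorm ℝ B}

theorem norm_map_le_of_satisfiesSt (hp : ∀ v : E, p ⟨const X v, hA v⟩ = 0) {S : A →ₗ[ℝ] B}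
    (hiso : PreservesMaxNorm p q S) (hSt : SatisfiesSt hA S) {h : A} (hq : q (S h) ≤ ‖S h‖) :
    ‖S h‖ ≤ ‖h‖ := by
  by_contra! hlt
  set s := ‖S h‖ - ‖h‖
  have hs : 0 < s := sub_pos.2 hlt
  obtain ⟨y₀, hy₀⟩ := (S h : C(Y, F)).exists_norm_apply_eq_norm (hlt.trans_le' (norm_nonneg h))
  obtain ⟨v, hv, hgt⟩ := hSt.exists_lt_norm_add_smul ((S h : C(Y, F)) y₀) y₀ hs
  set c : A := ⟨const X v, hA v⟩
  have hph : p h ≤ ‖S h‖ := (le_max_right _ _).trans ((hiso h).symm.le.trans (max_le le_rfl hq))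
  have hc : ‖c‖ ≤ 1 := ((const X v).norm_le zero_le_one).2 fun _ => hv.le
  have hupper : ‖S (h + s • c)‖ ≤ ‖S h‖ :=
    (hiso.norm_map_le _).trans <| max_le
      ((norm_add_smul_le_of_norm_le_one h hc hs.le).trans_eq (by ring))
      ((p.map_add_smul_le_of_map_eq_zero (hp v) h s).trans hph)
  have hlower : ‖S h‖ < ‖S (h + s • c)‖ :=
    calc ‖S h‖ = ‖(S h : C(Y, F)) y₀‖ := hy₀.symm
      _ < ‖(S h : C(Y, F)) y₀ + s • (S c : C(Y, F)) y₀‖ := hgt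
      _ = ‖(S (h + s • c) : C(Y, F)) y₀‖ := by simp
      _ ≤ ‖S (h + s • c)‖ := norm_coe_le_norm _ _
  exact hlower.not_ge hupper

theorem norm_le_norm_map_of_dominated (hp : ∀ v : E, p ⟨const X v, hA v⟩ = 0) {S : A →ₗ[ℝ] B}
    (hiso : PreservesMaxNorm p q S) (hdom : ∀ h, p h ≤ ‖h‖ → ‖h‖ ≤ ‖S h‖) (f : A) :
    ‖f‖ ≤ ‖S f‖ := by
  rcases (norm_nonneg f).eq_or_lt with h0 | hpos
  · exact h0 ▸ norm_nonneg _
  obtain ⟨x₀, hx₀⟩ := (f : C(X, E)).exists_norm_apply_eq_norm hpos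
  set t := p f
  have ht : 0 ≤ t := apply_nonneg p f
  set v := ‖f‖⁻¹ • (f : C(X, E)) x₀
  set c : A := ⟨const X v, hA v⟩
  rw [Submodule.norm_coe] at hx₀
  have hv : ‖v‖ = 1 := by
    rw [norm_smul, norm_inv, norm_norm, hx₀, inv_mul_cancel₀ hpos.ne']
  have hSc : ‖S c‖ ≤ 1 :=
    (hiso.norm_map_le c).trans (max_le (((const X v).norm_le zero_le_one).2 fun _ => hv.le)
      (by rw [hp v]; exact zero_le_one))
  have hfc : ‖f‖ + t ≤ ‖f + t • c‖ :=
    calc ‖f‖ + t = ‖(f : C(X, E)) x₀‖ + ‖t • v‖ := by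
          rw [norm_smul, hv, Real.norm_of_nonneg ht, mul_one, hx₀]
      _ = ‖(f : C(X, E)) x₀ + t • v‖ :=
          ((SameRay.sameRay_nonneg_smul_right _ (inv_nonneg.2 hpos.le)).nonneg_smul_right
            ht).norm_add.symm
      _ ≤ ‖f + t • c‖ := norm_coe_le_norm (f + t • c : C(X, E)) x₀
  have hpfc : p (f + t • c) ≤ ‖f + t • c‖ :=
    (p.map_add_smul_le_of_map_eq_zero (hp v) f t).trans (by linarith [norm_nonneg f])
  have hSfc : ‖S (f + t • c)‖ ≤ ‖S f‖ + t := by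
    rw [map_add, map_smul]
    exact norm_add_smul_le_of_norm_le_one _ hSc ht
  linarith [hfc.trans ((hdom _ hpfc).trans hSfc)]

theorem norm_le_norm_apply_of_satisfiesSt (hp : ∀ v : E, p ⟨const X v, hA v⟩ = 0)
    {hB : ∀ w : F, const Y w ∈ B} (hq : ∀ w : F, q ⟨const Y w, hB w⟩ = 0) {S : A ≃ₗ[ℝ] B}
    (hiso : PreservesMaxNorm p q S) (hSt : SatisfiesSt hB (S.symm : B →ₗ[ℝ] A)) (f : A) :
    ‖f‖ ≤ ‖S f‖ :=
  norm_le_norm_map_of_dominated hp hiso (fun h hh => by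
    simpa using norm_map_le_of_satisfiesSt hq hiso.symm hSt (h := S h) (by simpa using hh)) f

theorem norm_apply_eq_of_satisfiesSt (hp : ∀ v : E, p ⟨const X v, hA v⟩ = 0)
    {hB : ∀ w : F, const Y w ∈ B} (hq : ∀ w : F, q ⟨const Y w, hB w⟩ = 0) {S : A ≃ₗ[ℝ] B}
    (hiso : PreservesMaxNorm p q S) (hSt : SatisfiesSt hA (S : A →ₗ[ℝ] B))
    (hSt_symm : SatisfiesSt hB (S.symm : B →ₗ[ℝ] A)) (f : A) : ‖S f‖ = ‖f‖ := by
  refine le_antisymm ?_ (norm_le_norm_apply_of_satisfiesSt hp hq hiso hSt_symm f)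
  simpa using norm_le_norm_apply_of_satisfiesSt hq hp hiso.symm (by simpa using hSt) (S f)

end

theorem sup_norm_isometry_of_St {X Y : Type*} [TopologicalSpace X] [CompactSpace X]
    [TopologicalSpace Y] [CompactSpace Y]
    {E F : Type*} [NormedAddCommGroup E] [NormedSpace ℝ E]
    [NormedAddCommGroup F] [NormedSpace ℝ F]
    (A : Submodule ℝ C(X, E)) (B : Submodule ℝ C(Y, F))
    (hA : ∀ v : E, ContinuousMap.const X v ∈ A)
    (hB : ∀ w : F, ContinuousMap.const Y w ∈ B)
    (p : Seminorm ℝ A) (q : Seminorm ℝ B)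
    (hp : ∀ v : E, p ⟨ContinuousMap.const X v, hA v⟩ = 0)
    (hq : ∀ w : F, q ⟨ContinuousMap.const Y w, hB w⟩ = 0)
    (T : A →ₗ[ℝ] B) (hsurj : Function.Surjective T)
    -- `T` is an isometry for the norms `max(‖·‖_∞, p(·))` and `max(‖·‖_∞, q(·))`
    (hiso : ∀ f : A, max ‖(T f : C(Y, F))‖ (q (T f)) = max ‖(f : C(X, E))‖ (p f))
    -- property (St) for `T`
    (hSt : ∀ (u : F) (y₀ : Y), ∃ v : E, ‖v‖ = 1 ∧
      ‖(T ⟨ContinuousMap.const X v, hA v⟩ : C(Y, F)) y₀ + u‖ > ‖u‖)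
    -- property (St) for `T⁻¹`
    (hSt' : ∀ (u : E) (x₀ : X), ∃ w : F, ‖w‖ = 1 ∧ ∃ g : A,
      T g = ⟨ContinuousMap.const Y w, hB w⟩ ∧ ‖(g : C(X, E)) x₀ + u‖ > ‖u‖) :
    ∀ f : A, ‖(T f : C(Y, F))‖ = ‖(f : C(X, E))‖ := by
  have hiso : PreservesMaxNorm p q T := hiso
  obtain ⟨e, rfl⟩ : ∃ e : A ≃ₗ[ℝ] B, (e : A →ₗ[ℝ] B) = T :=
    ⟨.ofBijective T ⟨hiso.injective, hsurj⟩, LinearMap.ext fun _ => rfl⟩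
  have hSt_symm : SatisfiesSt hB (e.symm : B →ₗ[ℝ] A) := fun u x₀ => by
    obtain ⟨w, hw, g, hg, hgt⟩ := hSt' u x₀
    refine ⟨w, hw, ?_⟩
    rwa [← hg, LinearEquiv.coe_coe, LinearEquiv.coe_coe, e.symm_apply_apply]
  exact norm_apply_eq_of_satisfiesSt hp hq hiso hSt hSt_symm
end

section
/- Every strictly convex normed space satisfies property $(D)$, i.e., any two T-sets in it are discrepant. -/
/-- Two T-sets are discrepant. -/
def Discrepant {E : Type*} [NormedAddCommGroup E] (S R : Set E) : Prop :=
  S ∩ R = {0} ∨ ∃ L : Set E, IsTSet L ∧ S ∩ L = {0} ∧ R ∩ L = {0}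

section NormedGroup

variable {E : Type*} [NormedAddCommGroup E]

lemma NormAdditive.norm_add {S : Set E} (hS : NormAdditive S) {u v : E} (hu : u ∈ S)
    (hv : v ∈ S) : ‖u + v‖ = ‖u‖ + ‖v‖ := by
  simpa using hS [u, v] (by simp [hu, hv])

end NormedGroup

section NormedSpace

variable {E : Type*} [NormedAddCommGroup E] [NormedSpace ℝ E]

lemma normAdditive_sameRay {x : E} (hx : x ≠ 0) : NormAdditive {y | SameRay ℝ x y} := by
  suffices key : ∀ l : List E, (∀ e ∈ l, SameRay ℝ x e) →
      SameRay ℝ x l.sum ∧ ‖l.sum‖ = (l.map fun e => ‖e‖).sum from fun l hl => (key l hl).2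
  intro l hl
  induction l with
  | nil => simp
  | cons a l ih =>
    have ha : SameRay ℝ x a := hl a List.mem_cons_self
    obtain ⟨hsum, hnorm⟩ := ih fun e he => hl e (List.mem_cons_of_mem a he)
    have ha_sum : SameRay ℝ a l.sum := ha.symm.trans hsum fun h => absurd h hx
    simp only [List.sum_cons, List.map_cons]
    exact ⟨ha.add_right hsum, by rw [ha_sum.norm_add, hnorm]⟩

lemma sameRay_inter_sameRay_neg {x : E} (hx : x ≠ 0) :
    {y | SameRay ℝ x y} ∩ {y | SameRay ℝ (-x) y} = {0} := by
  ext y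
  constructor
  · rintro ⟨hxy, hy_neg⟩
    by_contra hy
    exact hx (eq_zero_of_sameRay_self_neg (hxy.trans hy_neg.symm fun h => absurd h hy))
  · rintro rfl
    exact ⟨SameRay.zero_right x, SameRay.zero_right (-x)⟩

variable [StrictConvexSpace ℝ E]

lemma NormAdditive.subset_sameRay {S : Set E} (hS : NormAdditive S) {x : E} (hx : x ∈ S) :
    S ⊆ {y | SameRay ℝ x y} :=
  fun _ hy => sameRay_iff_norm_add.mpr (hS.norm_add hx hy)

lemma isTSet_sameRay {x : E} (hx : x ≠ 0) : IsTSet {y | SameRay ℝ x y} :=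
  ⟨normAdditive_sameRay hx, fun _ hR hsub =>
    (hR.subset_sameRay (hsub SameRay.rfl)).antisymm hsub⟩

lemma IsTSet.eq_sameRay {S : Set E} (hS : IsTSet S) {x : E} (hx : x ≠ 0) (hxS : x ∈ S) :
    S = {y | SameRay ℝ x y} :=
  (hS.2 _ (normAdditive_sameRay hx) (hS.1.subset_sameRay hxS)).symm

end NormedSpace

theorem strictConvex_propertyD {E : Type*} [NormedAddCommGroup E] [NormedSpace ℝ E]
    (hsc : ∀ u v : E, ‖u‖ = 1 → ‖v‖ = 1 → u ≠ v → ‖u + v‖ < 2) :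
    ∀ S R : Set E, IsTSet S → IsTSet R → Discrepant S R := by
  have : StrictConvexSpace ℝ E :=
    StrictConvexSpace.of_norm_add_ne_two fun u v hu hv huv => (hsc u v hu hv huv).ne
  intro S R hS hR
  by_cases h : ∃ z ∈ S ∩ R, z ≠ 0
  · obtain ⟨z, ⟨hzS, hzR⟩, hz⟩ := h
    refine Or.inr ⟨{y | SameRay ℝ (-z) y}, isTSet_sameRay (neg_ne_zero.mpr hz), ?_, ?_⟩
    · rw [hS.eq_sameRay hz hzS, sameRay_inter_sameRay_neg hz]
    · rw [hR.eq_sameRay hz hzR, sameRay_inter_sameRay_neg hz]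
  · push Not at h
    exact Or.inl (Set.Subset.antisymm h (Set.singleton_subset_iff.mpr ⟨hS.zero_mem, hR.zero_mem⟩))
end
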